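/- arXiv:1805.08580 — 3 statements merged into one kernel-verified Lean document; each statement's English description precedes it below -/
import Mathlib

section
/- Let G be a group, H ≤ G a subgroup, and Γ ≤ G a finite index subgroup. Then H is separable in G if and only if H ∩ Γ is separable in Γ. -/
def Subgroup.IsSeparable {G : Type*} [Group G] (H : Subgroup G) : Prop :=
  ∀ g : G, g ∉ H → ∃ K : Subgroup G, K.FiniteIndex ∧ H ≤ K ∧ g ∉ K

namespace Subgroup

variable {G : Type*} [Group G]

theorem IsSeparable.comap {G' : Type*} [Group G'] {H : Subgroup G} (hH : H.IsSeparable)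
    (f : G' →* G) : (H.comap f).IsSeparable := by
  intro g hg
  obtain ⟨K, hK, hHK, hgK⟩ := hH (f g) hg
  have hKf : (K.comap f).FiniteIndex :=
    ⟨by rw [index_comap]; exact (isFiniteRelIndex_of_finiteIndex (H := K)).relIndex_ne_zero⟩
  exact ⟨K.comap f, hKf, comap_mono hHK, hgK⟩

theorem isSeparable_inf_of_subgroupOf {H Γ : Subgroup G} [hΓ : Γ.FiniteIndex]
    (hH : (H.subgroupOf Γ).IsSeparable) : (H ⊓ Γ).IsSeparable := by
  intro g hg
  by_cases hgΓ : g ∈ Γ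
  · obtain ⟨L, hL, hHL, hgL⟩ := hH ⟨g, hgΓ⟩ fun hgH => hg ⟨hgH, hgΓ⟩
    have hLf : (L.map Γ.subtype).FiniteIndex :=
      ⟨by rw [index_map_subtype]; exact mul_ne_zero hL.index_ne_zero hΓ.index_ne_zero⟩
    refine ⟨L.map Γ.subtype, hLf, fun x hx => ⟨⟨x, hx.2⟩, hHL hx.1, rfl⟩, ?_⟩
    rintro ⟨y, hy, hyg⟩
    exact hgL (Subtype.ext (a2 := ⟨g, hgΓ⟩) hyg ▸ hy)
  · exact ⟨Γ, hΓ, inf_le_right, hgΓ⟩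

theorem IsSeparable.of_inf {H Γ : Subgroup G} [Γ.FiniteIndex] (hH : (H ⊓ Γ).IsSeparable) :
    H.IsSeparable := by
  intro g hg
  by_cases hgN : g ∈ H ⊔ Γ.normalCore
  swap
  · exact ⟨_, finiteIndex_of_le le_sup_right, le_sup_left, hgN⟩
  obtain ⟨a, ha, n, hn, rfl⟩ := mem_sup_of_normal_right.mp hgN
  have hnΓ : n ∈ Γ := Γ.normalCore_le hn
  obtain ⟨L, hL, hHL, hnL⟩ := hH n fun hnH => hg (H.mul_mem ha hnH.1)
  -- If `a * n = b * m` with `m` in this core, then `a⁻¹ * b = n * m⁻¹ ∈ H ⊓ Γ ≤ L`, forcing `n ∈ L`.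
  refine ⟨H ⊔ (L.normalCore ⊓ Γ.normalCore), finiteIndex_of_le le_sup_right, le_sup_left, ?_⟩
  intro hmem
  obtain ⟨b, hb, m, ⟨hmL, hmN⟩, hbm⟩ := mem_sup_of_normal_right.mp hmem
  have hab : a⁻¹ * b = n * m⁻¹ := by
    rw [inv_mul_eq_iff_eq_mul, ← mul_assoc, eq_mul_inv_iff_mul_eq, hbm]
  have habL : a⁻¹ * b ∈ L :=
    hHL ⟨H.mul_mem (H.inv_mem ha) hb, hab ▸ Γ.mul_mem hnΓ (Γ.inv_mem (Γ.normalCore_le hmN))⟩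
  have hn_eq : n = a⁻¹ * b * m := by rw [hab, inv_mul_cancel_right]
  exact hnL (hn_eq ▸ L.mul_mem habL (L.normalCore_le hmL))

end Subgroup

theorem separable_iff_inter_finiteIndex {G : Type*} [Group G] (H Γ : Subgroup G)
    (hΓ : Γ.FiniteIndex) : H.IsSeparable ↔ (H.subgroupOf Γ).IsSeparable :=
  ⟨fun hH => hH.comap Γ.subtype,
    fun hH => (Subgroup.isSeparable_inf_of_subgroupOf hH).of_inf⟩
end

section
/- Let G be a group, H ≤ G a subgroup, and H' ≤ H a finite index subgroup of H. If H' is separable in G, then H is separable in G. -/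
namespace Subgroup

variable {G : Type*} [Group G]

theorem IsSeparable.exists_finiteIndex_forall_notMem {H : Subgroup G} (hH : H.IsSeparable)
    {ι : Type*} [Finite ι] (f : ι → G) (hf : ∀ i, f i ∉ H) :
    ∃ K : Subgroup G, K.FiniteIndex ∧ H ≤ K ∧ ∀ i, f i ∉ K := by
  choose K hKfi hHK hfK using fun i => hH (f i) (hf i)
  exact ⟨⨅ i, K i, finiteIndex_iInf hKfi, le_iInf hHK,
    fun i hi => hfK i (iInf_le K i hi)⟩

theorem notMem_sup_normalCore {H K : Subgroup G} {g : G} (hg : ∀ h ∈ H, h⁻¹ * g ∉ K) :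
    g ∉ H ⊔ K.normalCore := by
  rw [mem_sup_of_normal_right]
  rintro ⟨h, hh, n, hn, rfl⟩
  exact hg h hh (by simpa using K.normalCore_le hn)

theorem coe_out_inv_mul_mem {H H' : Subgroup G} {h : G} (hh : h ∈ H) :
    (((QuotientGroup.mk ⟨h, hh⟩ : H ⧸ H'.subgroupOf H).out : H) : G)⁻¹ * h ∈ H' :=
  mem_subgroupOf.mp (QuotientGroup.eq.mp (QuotientGroup.out_eq' _))

end Subgroup

open Subgroup in
theorem separable_of_finiteIndex_subgroup {G : Type*} [Group G] (H H' : Subgroup G)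
    (hle : H' ≤ H) (hfi : (H'.subgroupOf H).FiniteIndex)
    (hsep : H'.IsSeparable) : H.IsSeparable := by
  intro g hg
  have : Finite (H ⧸ H'.subgroupOf H) := finite_quotient_of_finiteIndex
  set rep : H ⧸ H'.subgroupOf H → G := fun q => (q.out : G)
  have hrep : ∀ q, (rep q)⁻¹ * g ∉ H' := fun q hq =>
    hg (by simpa [rep] using H.mul_mem q.out.2 (hle hq))
  obtain ⟨K, hKfi, hH'K, hK⟩ := hsep.exists_finiteIndex_forall_notMem _ hrep
  refine ⟨H ⊔ K.normalCore, finiteIndex_of_le le_sup_right, le_sup_left,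
    notMem_sup_normalCore fun h hh hhg => ?_⟩
  -- `rep q ∈ h H'` for the coset `q` of `h`, so `(rep q)⁻¹ g ∈ H' (h⁻¹ g) ⊆ K`.
  apply hK (QuotientGroup.mk ⟨h, hh⟩)
  simpa [rep, mul_assoc] using K.mul_mem (hH'K (coe_out_inv_mul_mem hh)) hhg
end

section
/- Let c = (x, 0) ∈ ℤ² with x a positive integer, and let t = (y, z), t' = (y', z') ∈ ℤ² with z, z' nonzero. Then for B = x·|z'| and B' = x·|z|, and for every positive integer α, the subgroup of ℤ² generated by c and αBt equals the subgroup generated by c and αB't'. -/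
lemma key_mem (x y z y' z' c2 α : ℤ) (hc2 : |z'| * z = c2 * (|z| * z')) :
    (α * (x * |z'|)) • ((y, z) : ℤ × ℤ) ∈
      AddSubgroup.closure {((x, 0) : ℤ × ℤ), (α * (x * |z|)) • (y', z')} := by
  have h : (α * (x * |z'|)) • ((y, z) : ℤ × ℤ) =
      (α * |z'| * y - c2 * (α * |z| * y')) • ((x, 0) : ℤ × ℤ) +
        c2 • ((α * (x * |z|)) • ((y', z') : ℤ × ℤ)) := by
    ext
    · simp only [Prod.smul_fst, Prod.fst_add, smul_eq_mul]
      ring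
    · simp only [Prod.smul_snd, Prod.snd_add, smul_eq_mul]
      linear_combination α * x * hc2
  rw [h]
  have h1 : ((x, 0) : ℤ × ℤ) ∈
      AddSubgroup.closure {((x, 0) : ℤ × ℤ), (α * (x * |z|)) • (y', z')} :=
    AddSubgroup.subset_closure (Set.mem_insert _ _)
  have h2 : (α * (x * |z|)) • ((y', z') : ℤ × ℤ) ∈
      AddSubgroup.closure {((x, 0) : ℤ × ℤ), (α * (x * |z|)) • (y', z')} :=
    AddSubgroup.subset_closure (Set.mem_insert_of_mem _ rfl)
  exact add_mem (zsmul_mem h1 _) (zsmul_mem h2 _)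

theorem lemma_Z2_explicit (x y z y' z' : ℤ) (hx : 0 < x) (hz : z ≠ 0) (hz' : z' ≠ 0) :
    ∀ α : ℤ, 0 < α →
      AddSubgroup.closure {((x, 0) : ℤ × ℤ), (α * (x * |z'|)) • (y, z)} =
        AddSubgroup.closure {((x, 0) : ℤ × ℤ), (α * (x * |z|)) • (y', z')} := by
  intro α hα
  obtain ⟨c2, hc2, hc2'⟩ : ∃ c2 : ℤ, |z'| * z = c2 * (|z| * z') ∧
      |z| * z' = c2 * (|z'| * z) := by
    rcases abs_choice z with h | h <;> rcases abs_choice z' with h' | h'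
    · exact ⟨1, by rw [h, h']; ring, by rw [h, h']; ring⟩
    · exact ⟨-1, by rw [h, h']; ring, by rw [h, h']; ring⟩
    · exact ⟨-1, by rw [h, h']; ring, by rw [h, h']; ring⟩
    · exact ⟨1, by rw [h, h']; ring, by rw [h, h']; ring⟩
  apply le_antisymm <;> rw [AddSubgroup.closure_le] <;>
    rw [Set.insert_subset_iff, Set.singleton_subset_iff]
  · exact ⟨AddSubgroup.subset_closure (by simp), key_mem x y z y' z' c2 α hc2⟩
  · exact ⟨AddSubgroup.subset_closure (by simp), key_mem x y' z' y z c2 α hc2'⟩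
end
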